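/- arXiv:math/0502296 — 3 statements merged into one kernel-verified Lean document; each statement's English description precedes it below -/
import Mathlib

section
/- Every elliptic function vanishes identically if it satisfies f(t+1) = f(t) and f(t+tau) = c*f(t) with c = exp(2*pi*i*w) not equal to any value exp(2*pi*i*n*tau) for integer n (more precisely: if f is entire, f(t+1) = f(t), f(t+tau) = exp(2*pi*i*w)*f(t), and w is not in Z + Z*tau, then f = 0). -/
/-!
For `n : ℤ` the function `g t = e^{2πint} f t` is entire, `1`-periodic and satisfies
`g (t + τ) = q g t` with `q = e^{2πi(w + nτ)}`. Cauchy's theorem moves the integral of `g` over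
`[0, 1]` to `[τ, τ + 1]`, so `(q - 1) ∫₀¹ g = 0`, and `q ≠ 1` because `w ∉ ℤ + ℤτ`. Hence all
Fourier coefficients of `f` restricted to `ℝ` vanish, so `f = 0` on `ℝ`, and on `ℂ` by the
identity theorem.
-/

open Complex Function intervalIntegral
open scoped Real Topology

theorem Function.Periodic.intervalIntegral_comp_add_eq_of_differentiable {E : Type*}
    [NormedAddCommGroup E] [NormedSpace ℂ E] [CompleteSpace E] {g : ℂ → E} {T : ℝ}
    (hg : Periodic g T) (hd : Differentiable ℂ g) (τ : ℂ) :
    ∫ x in (0 : ℝ)..T, g (x + τ) = ∫ x in (0 : ℝ)..T, g x := by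
  -- Cauchy's theorem on the rectangle `[0, T] × [0, Im τ]` translated by `Re τ`; its vertical
  -- sides cancel by periodicity.
  have hrect := integral_boundary_rect_eq_zero_of_differentiableOn (fun z ↦ g (z + τ.re)) 0
    (T + τ.im * I) (hd.comp (differentiable_id.add_const _)).differentiableOn
  have hsides (y : ℝ) : g (T + y * I + τ.re) = g (y * I + τ.re) := by
    rw [show (T : ℂ) + y * I + τ.re = y * I + τ.re + T by ring, hg]
  simp only [zero_re, zero_im, add_re, ofReal_re, mul_re, I_re, I_im, ofReal_im, add_im, mul_im,
    mul_zero, zero_mul, mul_one, sub_zero, add_zero, zero_add, ofReal_zero, hsides,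
    add_sub_cancel_right, sub_eq_zero] at hrect
  have hreal : Periodic (fun x : ℝ ↦ g x) T := fun x ↦ by
    simpa only [ofReal_add] using hg x
  have hshift : ∫ x in (0 : ℝ)..T, g (x + τ.re) = ∫ x in (0 : ℝ)..T, g x := by
    have := integral_comp_add_right (fun x : ℝ ↦ g x) τ.re (a := 0) (b := T)
    simp only [ofReal_add, zero_add] at this
    rw [this, add_comm, hreal.intervalIntegral_add_eq τ.re 0, zero_add]
  rw [← hshift, hrect]
  refine integral_congr fun x _ ↦ ?_
  rw [add_assoc, add_comm _ (τ.re : ℂ), re_add_im]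

theorem Function.Periodic.intervalIntegral_eq_zero_of_quasiperiodic {E : Type*}
    [NormedAddCommGroup E] [NormedSpace ℂ E] [CompleteSpace E] {g : ℂ → E} {T : ℝ}
    (hg : Periodic g T) (hd : Differentiable ℂ g) {τ q : ℂ} (hq : q ≠ 1)
    (hτ : ∀ t, g (t + τ) = q • g t) :
    ∫ x in (0 : ℝ)..T, g x = 0 := by
  have h := hg.intervalIntegral_comp_add_eq_of_differentiable hd τ
  simp_rw [hτ, intervalIntegral.integral_smul] at h
  have h' : (q - 1) • ∫ x in (0 : ℝ)..T, g x = 0 := by rw [sub_smul, one_smul, h, sub_self]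
  exact (smul_eq_zero.1 h').resolve_left (sub_ne_zero.2 hq)

theorem ContinuousMap.eq_zero_of_fourierCoeff_eq_zero {T : ℝ} [Fact (0 < T)]
    {f : C(AddCircle T, ℂ)} (h : ∀ n, fourierCoeff f n = 0) : f = 0 := by
  have hcoeff : fourierCoeff f = 0 := funext h
  ext x
  have hsum := has_pointwise_sum_fourier_series_of_summable (f := f)
    (by rw [hcoeff]; exact summable_zero) x
  simp only [hcoeff, Pi.zero_apply, zero_smul] at hsum
  exact hsum.unique hasSum_zero

theorem Function.Periodic.eq_zero_of_intervalIntegral_exp_mul_eq_zero {f : ℝ → ℂ} {T : ℝ}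
    (hT : 0 < T) (hf : Periodic f T) (hc : Continuous f)
    (h : ∀ n : ℤ, ∫ x in (0 : ℝ)..T, exp (2 * π * I * n * x / T) * f x = 0) : f = 0 := by
  have : Fact (0 < T) := ⟨hT⟩
  let F : C(AddCircle T, ℂ) := ⟨hf.lift, hc.quotient_liftOn' _⟩
  have hF : F = 0 := ContinuousMap.eq_zero_of_fourierCoeff_eq_zero fun n ↦ by
    rw [fourierCoeff_eq_intervalIntegral _ n 0, zero_add]
    simp only [fourier_coe_apply, smul_eq_mul]
    exact (congrArg ((1 / T) • ·) (h (-n))).trans (smul_zero _)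
  funext x
  exact congr($hF x)

theorem Differentiable.eq_zero_of_forall_ofReal_eq_zero {f : ℂ → ℂ} (hf : Differentiable ℂ f)
    (h : ∀ x : ℝ, f x = 0) : f = 0 := by
  have hfreq : ∃ᶠ z in 𝓝[≠] (0 : ℂ), f z = 0 := by
    have : Filter.Tendsto ofReal (𝓝[≠] 0) (𝓝[≠] 0) := by
      simpa using continuous_ofReal.continuousWithinAt.tendsto_nhdsWithin (x := 0)
        (s := {0}ᶜ) (t := {0}ᶜ) fun x hx ↦ by simpa using hx
    exact this.frequently (Filter.Frequently.of_forall h)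
  have han : AnalyticOnNhd ℂ f Set.univ := analyticOnNhd_univ_iff_differentiable.2 hf
  funext z
  exact han.eqOn_zero_of_preconnected_of_frequently_eq_zero isPreconnected_univ (Set.mem_univ 0)
    hfreq (Set.mem_univ z)

theorem intervalIntegral_exp_mul_eq_zero_of_quasiperiodic {f : ℂ → ℂ} {τ c : ℂ}
    (hf : Differentiable ℂ f) (h1 : Periodic f 1) (h2 : ∀ t, f (t + τ) = c * f t) (n : ℤ)
    (hn : c * exp (2 * π * I * n * τ) ≠ 1) :
    ∫ x in (0 : ℝ)..1, exp (2 * π * I * n * x) * f x = 0 := by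
  have hexp : Periodic (fun t : ℂ ↦ exp (2 * π * I * n * t)) 1 := fun t ↦ by
    dsimp only
    rw [show 2 * π * I * n * (t + 1) = 2 * π * I * n * t + n * (2 * π * I) by ring, exp_add,
      exp_int_mul_two_pi_mul_I, mul_one]
  refine (hexp.mul h1).intervalIntegral_eq_zero_of_quasiperiodic (τ := τ) (by fun_prop) hn
    fun t ↦ ?_
  simp only [Pi.mul_apply, smul_eq_mul, h2, mul_add, exp_add]
  ring

theorem entire_quasiperiodic_eq_zero_general (τ w : ℂ)
    (hw : ¬∃ m n : ℤ, w = (m : ℂ) + (n : ℂ) * τ)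
    (f : ℂ → ℂ) (hf : Differentiable ℂ f)
    (h1 : ∀ t, f (t + 1) = f t)
    (h2 : ∀ t, f (t + τ) = Complex.exp (2 * (Real.pi : ℂ) * Complex.I * w) * f t) :
    f = 0 := by
  have hq (n : ℤ) : exp (2 * π * I * w) * exp (2 * π * I * n * τ) ≠ 1 := by
    rw [← exp_add, Ne, exp_eq_one_iff]
    rintro ⟨m, hm⟩
    refine hw ⟨m, -n, mul_left_cancel₀ two_pi_I_ne_zero ?_⟩
    push_cast
    linear_combination hm
  have hreal : (fun x : ℝ ↦ f x) = 0 :=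
    Periodic.eq_zero_of_intervalIntegral_exp_mul_eq_zero one_pos
      (fun x ↦ by simpa using h1 x) (hf.continuous.comp continuous_ofReal) fun n ↦ by
        simpa using intervalIntegral_exp_mul_eq_zero_of_quasiperiodic hf h1 h2 n (hq n)
  exact hf.eq_zero_of_forall_ofReal_eq_zero (congrFun hreal)

/-- If `f : ℂ → ℂ` is entire, `f(t+1) = f(t)`, `f(t+τ) = e^{2πiw} f(t)` with
`Im τ > 0` and `w ∉ ℤ + ℤτ`, then `f` vanishes identically. -/
theorem entire_quasiperiodic_eq_zero (τ w : ℂ) (hτ : 0 < τ.im)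
    (hw : ¬∃ m n : ℤ, w = (m : ℂ) + (n : ℂ) * τ)
    (f : ℂ → ℂ) (hf : Differentiable ℂ f)
    (h1 : ∀ t, f (t + 1) = f t)
    (h2 : ∀ t, f (t + τ) = Complex.exp (2 * (Real.pi : ℂ) * Complex.I * w) * f t) :
    f = 0 :=
  entire_quasiperiodic_eq_zero_general τ w hw f hf h1 h2
end

section
/- The sigma functions satisfy the three-term functional identity: sigma_{w1+w2}(t-u) * sigma_{w2}(s-t) - sigma_{w2}(s-u) * sigma_{w1}(t-u) + sigma_{w1}(t-s) * sigma_{w1+w2}(s-u) = 0, for all complex t, s, u at which all factors are defined and for generic parameters w1, w2. -/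
/-!
With `a = t - u` and `b = s - t`, clearing denominators turns the identity into the vanishing of
the theta combination `F = thetaThreeTerm θ w₁ w₂ b` at `a`. As functions of `a`, both `F` and
`D(a) = θ(w₁ + w₂ - a) θ(a + b)` are `1`-periodic and pick up the same factor under `a ↦ a + τ`,
and `F` vanishes on the zeros `w₁ + w₂ + Λ` and `-b + Λ` of `D`, where `Λ = ℤ + ℤτ`. When these two cosets are
disjoint the zeros of `D` are simple, so `F / D` extends to an entire doubly periodic function;
by Liouville it is constant, and it vanishes at `0` since `F 0 = 0`. The remaining values of `b`
follow by continuity.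
-/

open Complex Function Real

theorem exists_differentiable_mul_eq_of_simple_zeros {F D : ℂ → ℂ} (hF : Differentiable ℂ F)
    (hD : Differentiable ℂ D) (hzero : ∀ c, D c = 0 → F c = 0 ∧ deriv D c ≠ 0) :
    ∃ K : ℂ → ℂ, Differentiable ℂ K ∧ ∀ z, F z = K z * D z := by
  classical
  refine ⟨fun z => if D z = 0 then deriv F z / deriv D z else F z / D z, fun c => ?_, fun z => ?_⟩
  · by_cases hc : D c = 0
    · -- near `c`, the quotient is `dslope F c / dslope D c`, holomorphic since `dslope D c c ≠ 0`
      obtain ⟨hFc, hD'c⟩ := hzero c hc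
      have hdslope {f : ℂ → ℂ} (hf : Differentiable ℂ f) : Differentiable ℂ (dslope f c) :=
        differentiableOn_univ.1 <| (differentiableOn_dslope Filter.univ_mem).2 hf.differentiableOn
      have hsub {f : ℂ → ℂ} (hf : f c = 0) (z : ℂ) : f z = (z - c) * dslope f c z := by
        rw [← smul_eq_mul, sub_smul_dslope, hf, sub_zero]
      refine ((hdslope hF c).div (hdslope hD c) (by rwa [dslope_same])).congr_of_eventuallyEq ?_
      filter_upwards [(hdslope hD).continuous.continuousAt.eventually_ne
        (by rwa [dslope_same] : dslope D c c ≠ 0)] with z hz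
      rcases eq_or_ne z c with rfl | hzc
      · simp only [hc, if_true, dslope_same, Pi.div_apply]
      · have hzc' : z - c ≠ 0 := sub_ne_zero.2 hzc
        rw [hsub hc, if_neg (mul_ne_zero hzc' hz), hsub hFc, mul_div_mul_left _ _ hzc', Pi.div_apply]
    · refine ((hF c).div (hD c) hc).congr_of_eventuallyEq ?_
      filter_upwards [hD.continuous.continuousAt.eventually_ne hc] with z hz
      simp only [hz, if_false, Pi.div_apply]
  · by_cases hz : D z = 0
    · simp only [hz, (hzero z hz).1, mul_zero]
    · simp only [hz, if_false, div_mul_cancel₀ _ hz]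

theorem Continuous.ext_of_mul_right {K L D : ℂ → ℂ} (hK : Continuous K) (hL : Continuous L)
    (hD : {z | D z = 0}.Countable) (h : ∀ z, K z * D z = L z * D z) : K = L :=
  Continuous.ext_on (hD.dense_compl ℂ) hK hL fun z hz => mul_right_cancel₀ hz (h z)

theorem Continuous.periodic_of_mul_eq {F K D e : ℂ → ℂ} {c : ℂ} (hK : Continuous K)
    (hD : {z | D z = 0}.Countable) (he : ∀ z, e z ≠ 0) (hFK : ∀ z, F z = K z * D z)
    (hF : ∀ z, F (z + c) = e z * F z) (hDc : ∀ z, D (z + c) = e z * D z) : Periodic K c :=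
  congrFun <| (hK.comp (continuous_add_const c)).ext_of_mul_right hK hD fun z =>
    mul_left_cancel₀ (he z) <| by
      simp only [comp_apply]
      rw [← mul_assoc, mul_comm (e z), mul_assoc, ← hDc, ← hFK, hF, hFK, mul_left_comm]

theorem linearIndependent_pair_one_of_im_ne_zero {τ : ℂ} (hτ : τ.im ≠ 0) :
    LinearIndependent ℝ ![1, τ] := by
  refine LinearIndependent.pair_iff.2 fun s t h => ?_
  have ht : t = 0 := by simpa [hτ] using congrArg Complex.im h
  subst ht
  exact ⟨by simpa using h, rfl⟩

theorem Differentiable.apply_eq_apply_of_periodic {f : ℂ → ℂ} {τ : ℂ} (hτ : τ.im ≠ 0)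
    (hf : Differentiable ℂ f) (h1 : Periodic f 1) (hτf : Periodic f τ) (z w : ℂ) : f z = f w := by
  let L : PeriodPair := ⟨1, τ, linearIndependent_pair_one_of_im_ne_zero hτ⟩
  refine hf.apply_eq_apply_of_bounded (IsZLattice.isCompact_range_of_periodic L.lattice f
    hf.continuous fun z l hl => ?_).isBounded z w
  obtain ⟨m, n, rfl⟩ := PeriodPair.mem_lattice.1 hl
  rw [← add_assoc, hτf.int_mul n, h1.int_mul m]

def periodLattice (τ : ℂ) : Submodule ℤ ℂ := Submodule.span ℤ {1, τ}

theorem mem_periodLattice {τ z : ℂ} : z ∈ periodLattice τ ↔ ∃ m n : ℤ, z = m + n * τ := by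
  simp only [periodLattice, Submodule.mem_span_pair, zsmul_eq_mul, mul_one, eq_comm]

theorem countable_periodLattice (τ : ℂ) : (periodLattice τ : Set ℂ).Countable :=
  (Set.countable_range fun p : ℤ × ℤ => (p.1 : ℂ) + p.2 * τ).mono fun _ hz => by
    obtain ⟨m, n, rfl⟩ := mem_periodLattice.1 hz
    exact ⟨(m, n), rfl⟩

theorem countable_setOf_add_mem_periodLattice (τ c : ℂ) :
    {z | c + z ∈ periodLattice τ}.Countable :=
  (countable_periodLattice τ).preimage (add_right_injective c)

theorem countable_setOf_sub_mem_periodLattice (τ c : ℂ) :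
    {z | c - z ∈ periodLattice τ}.Countable :=
  (countable_periodLattice τ).preimage (sub_right_injective)

theorem eq_zero_add_of_mem_periodLattice {f e : ℂ → ℂ} {τ x l : ℂ} (he : ∀ z, e z ≠ 0)
    (h1 : Periodic f 1) (hτ : ∀ z, f (z + τ) = e z * f z) (hx : f x = 0)
    (hl : l ∈ periodLattice τ) : f (x + l) = 0 := by
  obtain ⟨m, n, rfl⟩ := mem_periodLattice.1 hl
  have hτ0 : Periodic (fun z => f z = 0) τ := fun z => by simp only [hτ, mul_eq_zero, he, false_or]
  have := (((h1.comp (· = 0)).int_mul m).add_period (hτ0.int_mul n)) x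
  simpa [← add_assoc, hx] using this

structure IsJacobiTheta₁ (τ : ℂ) (θ : ℂ → ℂ) : Prop where
  differentiable : Differentiable ℂ θ
  add_one : ∀ z, θ (z + 1) = -θ z
  add_tau : ∀ z, θ (z + τ) = -exp (-π * I * τ - 2 * π * I * z) * θ z
  neg : ∀ z, θ (-z) = -θ z
  eq_zero_iff : ∀ z, θ z = 0 ↔ z ∈ periodLattice τ
  deriv_ne_zero : ∀ z ∈ periodLattice τ, deriv θ z ≠ 0

def thetaProd (θ : ℂ → ℂ) (p q a : ℂ) : ℂ := θ (p - a) * θ (a + q)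

/-- The identity with denominators cleared, each term written as a `thetaProd` (using
`θ (w₁ - a) = -θ (a - w₁)`). The three terms share `p - q = w₁ + w₂ - b`, which fixes the
multiplier under `a ↦ a + τ`. -/
def thetaThreeTerm (θ : ℂ → ℂ) (w₁ w₂ b : ℂ) : ℂ → ℂ := fun a =>
  θ (w₂ - b) * θ w₁ * thetaProd θ (w₁ + w₂) b a
    + θ (w₁ + w₂) * θ b * thetaProd θ (w₂ - b) (-w₁) a
    - θ (w₁ + b) * θ w₂ * thetaProd θ (w₁ + w₂ - b) 0 a

namespace IsJacobiTheta₁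

variable {τ : ℂ} {θ : ℂ → ℂ}

theorem apply_zero (hθ : IsJacobiTheta₁ τ θ) : θ 0 = 0 :=
  (hθ.eq_zero_iff 0).2 (zero_mem _)

theorem sub_one (hθ : IsJacobiTheta₁ τ θ) (z : ℂ) : θ (z - 1) = -θ z := by
  rw [← neg_neg (θ (z - 1)), ← hθ.add_one, sub_add_cancel]

theorem sub_tau (hθ : IsJacobiTheta₁ τ θ) (z : ℂ) :
    θ (z - τ) = -exp (-π * I * τ + 2 * π * I * z) * θ z := by
  rw [← sub_add_cancel z τ, hθ.add_tau, sub_add_cancel, ← mul_assoc, neg_mul_neg, ← Complex.exp_add,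
    show -π * I * τ + 2 * π * I * z + (-π * I * τ - 2 * π * I * (z - τ)) = 0 by ring,
    Complex.exp_zero, one_mul]

theorem differentiable_thetaProd (hθ : IsJacobiTheta₁ τ θ) (p q : ℂ) :
    Differentiable ℂ (thetaProd θ p q) := by
  unfold thetaProd
  have := hθ.differentiable
  fun_prop

theorem thetaProd_add_one (hθ : IsJacobiTheta₁ τ θ) (p q a : ℂ) :
    thetaProd θ p q (a + 1) = thetaProd θ p q a := by
  simp only [thetaProd, sub_add_eq_sub_sub, hθ.sub_one, add_right_comm a 1, hθ.add_one, neg_mul_neg]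

theorem thetaProd_add_tau (hθ : IsJacobiTheta₁ τ θ) (p q a : ℂ) :
    thetaProd θ p q (a + τ) = exp (2 * π * I * (p - q - 2 * a - τ)) * thetaProd θ p q a := by
  simp only [thetaProd, sub_add_eq_sub_sub, hθ.sub_tau, add_right_comm a τ, hθ.add_tau]
  rw [show exp (2 * π * I * (p - q - 2 * a - τ)) = exp (-π * I * τ + 2 * π * I * (p - a)) *
    exp (-π * I * τ - 2 * π * I * (a + q)) by rw [← Complex.exp_add]; ring_nf]
  ring

theorem thetaProd_eq_zero_iff (hθ : IsJacobiTheta₁ τ θ) {p q a : ℂ} :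
    thetaProd θ p q a = 0 ↔ p - a ∈ periodLattice τ ∨ a + q ∈ periodLattice τ := by
  simp only [thetaProd, mul_eq_zero, hθ.eq_zero_iff]

theorem deriv_thetaProd_ne_zero (hθ : IsJacobiTheta₁ τ θ) {p q a : ℂ}
    (hpq : p + q ∉ periodLattice τ) (ha : thetaProd θ p q a = 0) :
    deriv (thetaProd θ p q) a ≠ 0 := by
  have hderiv : HasDerivAt (thetaProd θ p q)
      (-deriv θ (p - a) * θ (a + q) + θ (p - a) * deriv θ (a + q)) a := by
    have h₁ := ((hθ.differentiable (p - a)).hasDerivAt).comp_const_sub p a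
    have h₂ := ((hθ.differentiable (a + q)).hasDerivAt).comp_add_const a q
    exact h₁.mul h₂
  rw [hderiv.deriv]
  have hsum : p - a + (a + q) = p + q := by ring
  rcases hθ.thetaProd_eq_zero_iff.1 ha with h | h
  · have hq : θ (a + q) ≠ 0 := fun h' => hpq <| hsum ▸ add_mem h ((hθ.eq_zero_iff _).1 h')
    rw [(hθ.eq_zero_iff _).2 h]
    simpa using ⟨hθ.deriv_ne_zero _ h, hq⟩
  · have hp : θ (p - a) ≠ 0 := fun h' => hpq <| hsum ▸ add_mem ((hθ.eq_zero_iff _).1 h') h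
    rw [(hθ.eq_zero_iff _).2 h]
    simpa using ⟨hp, hθ.deriv_ne_zero _ h⟩

theorem countable_setOf_thetaProd_eq_zero (hθ : IsJacobiTheta₁ τ θ) (p q : ℂ) :
    {a | thetaProd θ p q a = 0}.Countable := by
  simp only [hθ.thetaProd_eq_zero_iff, Set.ofPred_or, add_comm _ q]
  exact (countable_setOf_sub_mem_periodLattice τ p).union (countable_setOf_add_mem_periodLattice τ q)

section

variable (w₁ w₂ b : ℂ)

theorem differentiable_thetaThreeTerm (hθ : IsJacobiTheta₁ τ θ) :
    Differentiable ℂ (thetaThreeTerm θ w₁ w₂ b) := by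
  unfold thetaThreeTerm
  have := hθ.differentiable_thetaProd
  fun_prop

theorem thetaThreeTerm_add_one (hθ : IsJacobiTheta₁ τ θ) (a : ℂ) :
    thetaThreeTerm θ w₁ w₂ b (a + 1) = thetaThreeTerm θ w₁ w₂ b a := by
  simp only [thetaThreeTerm, hθ.thetaProd_add_one]

theorem thetaThreeTerm_add_tau (hθ : IsJacobiTheta₁ τ θ) (a : ℂ) :
    thetaThreeTerm θ w₁ w₂ b (a + τ) =
      exp (2 * π * I * (w₁ + w₂ - b - 2 * a - τ)) * thetaThreeTerm θ w₁ w₂ b a := by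
  simp only [thetaThreeTerm, hθ.thetaProd_add_tau, show w₂ - b - -w₁ = w₁ + w₂ - b by ring,
    sub_zero]
  ring

theorem thetaThreeTerm_zero (hθ : IsJacobiTheta₁ τ θ) : thetaThreeTerm θ w₁ w₂ b 0 = 0 := by
  simp only [thetaThreeTerm, thetaProd, sub_zero, zero_add, hθ.neg, hθ.apply_zero]
  ring

theorem thetaThreeTerm_add_self (hθ : IsJacobiTheta₁ τ θ) :
    thetaThreeTerm θ w₁ w₂ b (w₁ + w₂) = 0 := by
  simp only [thetaThreeTerm, thetaProd, sub_self, hθ.apply_zero,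
    show w₂ - b - (w₁ + w₂) = -(w₁ + b) by ring, show w₁ + w₂ - b - (w₁ + w₂) = -b by ring,
    show w₁ + w₂ + -w₁ = w₂ by ring, add_zero, hθ.neg]
  ring

theorem thetaThreeTerm_neg (hθ : IsJacobiTheta₁ τ θ) : thetaThreeTerm θ w₁ w₂ b (-b) = 0 := by
  simp only [thetaThreeTerm, thetaProd, neg_add_cancel, hθ.apply_zero, sub_neg_eq_add,
    show w₂ - b + b = w₂ by ring, show w₁ + w₂ - b + b = w₁ + w₂ by ring,
    show -b + -w₁ = -(w₁ + b) by ring, add_zero, hθ.neg]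
  ring

theorem thetaThreeTerm_eq_zero_of_thetaProd_eq_zero (hθ : IsJacobiTheta₁ τ θ) {a : ℂ}
    (ha : thetaProd θ (w₁ + w₂) b a = 0) : thetaThreeTerm θ w₁ w₂ b a = 0 := by
  have hzero {x : ℂ} (hx : thetaThreeTerm θ w₁ w₂ b x = 0) {l : ℂ} (hl : l ∈ periodLattice τ) :
      thetaThreeTerm θ w₁ w₂ b (x + l) = 0 :=
    eq_zero_add_of_mem_periodLattice (fun _ => exp_ne_zero _)
      (hθ.thetaThreeTerm_add_one w₁ w₂ b) (hθ.thetaThreeTerm_add_tau w₁ w₂ b) hx hl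
  rcases hθ.thetaProd_eq_zero_iff.1 ha with h | h
  · simpa using hzero (hθ.thetaThreeTerm_add_self w₁ w₂ b) (neg_mem h)
  · simpa using hzero (hθ.thetaThreeTerm_neg w₁ w₂ b) h

end

variable {w₁ w₂ : ℂ}

theorem thetaThreeTerm_eq_zero_of_notMem (hθ : IsJacobiTheta₁ τ θ) (hτ : τ.im ≠ 0)
    (hw : w₁ + w₂ ∉ periodLattice τ) {b : ℂ} (hb : b ∉ periodLattice τ)
    (hwb : w₁ + w₂ + b ∉ periodLattice τ) (a : ℂ) : thetaThreeTerm θ w₁ w₂ b a = 0 := by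
  obtain ⟨K, hK, hFK⟩ := exists_differentiable_mul_eq_of_simple_zeros
    (hθ.differentiable_thetaThreeTerm w₁ w₂ b) (hθ.differentiable_thetaProd (w₁ + w₂) b)
    fun c hc => ⟨hθ.thetaThreeTerm_eq_zero_of_thetaProd_eq_zero w₁ w₂ b hc,
      hθ.deriv_thetaProd_ne_zero hwb hc⟩
  have hD := hθ.countable_setOf_thetaProd_eq_zero (w₁ + w₂) b
  have hK1 : Periodic K 1 := hK.continuous.periodic_of_mul_eq (e := 1) hD (fun _ => one_ne_zero)
    hFK (by simpa using hθ.thetaThreeTerm_add_one w₁ w₂ b)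
    (by simpa using hθ.thetaProd_add_one (w₁ + w₂) b)
  have hKτ : Periodic K τ := hK.continuous.periodic_of_mul_eq hD (fun _ => exp_ne_zero _) hFK
    (hθ.thetaThreeTerm_add_tau w₁ w₂ b) (hθ.thetaProd_add_tau (w₁ + w₂) b)
  have hK0 : K 0 = 0 := by
    have hD0 : thetaProd θ (w₁ + w₂) b 0 ≠ 0 := by
      simpa [hθ.thetaProd_eq_zero_iff] using ⟨hw, hb⟩
    simpa [hθ.thetaThreeTerm_zero, hD0] using (hFK 0).symm
  rw [hFK, hK.apply_eq_apply_of_periodic hτ hK1 hKτ a 0, hK0, zero_mul]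

theorem thetaThreeTerm_eq_zero (hθ : IsJacobiTheta₁ τ θ) (hτ : τ.im ≠ 0)
    (hw : w₁ + w₂ ∉ periodLattice τ) (b a : ℂ) : thetaThreeTerm θ w₁ w₂ b a = 0 := by
  have hcont : Continuous fun b => thetaThreeTerm θ w₁ w₂ b a := by
    have := hθ.differentiable.continuous
    unfold thetaThreeTerm thetaProd
    fun_prop
  have hbad : {b | b ∈ periodLattice τ ∨ w₁ + w₂ + b ∈ periodLattice τ}.Countable :=
    (countable_periodLattice τ).union (countable_setOf_add_mem_periodLattice τ _)
  refine congrFun (Continuous.ext_on (hbad.dense_compl ℂ) hcont continuous_const fun b hb => ?_) b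
  simp only [Set.mem_compl_iff, Set.mem_ofPred_eq, not_or] at hb
  exact hθ.thetaThreeTerm_eq_zero_of_notMem hτ hw hb.1 hb.2 a

end IsJacobiTheta₁

theorem sigma_three_term_identity_general (τ : ℂ) (hτ : 0 < τ.im) (θ : ℂ → ℂ)
    (hθ : Differentiable ℂ θ)
    (hθ1 : ∀ z, θ (z + 1) = -θ z)
    (hθ2 : ∀ z, θ (z + τ) =
      -Complex.exp (-(Real.pi : ℂ) * Complex.I * τ - 2 * (Real.pi : ℂ) * Complex.I * z) * θ z)
    (hodd : ∀ z, θ (-z) = -θ z)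
    (hzero : ∀ z, θ z = 0 ↔ ∃ m n : ℤ, z = (m : ℂ) + (n : ℂ) * τ)
    (hsimple : ∀ m n : ℤ, deriv θ ((m : ℂ) + (n : ℂ) * τ) ≠ 0)
    (w₁ w₂ : ℂ)
    (hw₁ : ¬∃ m n : ℤ, w₁ = (m : ℂ) + (n : ℂ) * τ)
    (hw₂ : ¬∃ m n : ℤ, w₂ = (m : ℂ) + (n : ℂ) * τ)
    (hw₁₂ : ¬∃ m n : ℤ, w₁ + w₂ = (m : ℂ) + (n : ℂ) * τ)
    (t s u : ℂ)
    (htu : ¬∃ m n : ℤ, t - u = (m : ℂ) + (n : ℂ) * τ)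
    (hst : ¬∃ m n : ℤ, s - t = (m : ℂ) + (n : ℂ) * τ)
    (hsu : ¬∃ m n : ℤ, s - u = (m : ℂ) + (n : ℂ) * τ) :
    (fun w x => θ (w - x) * deriv θ 0 / (θ w * θ x)) (w₁ + w₂) (t - u) *
        (fun w x => θ (w - x) * deriv θ 0 / (θ w * θ x)) w₂ (s - t) -
      (fun w x => θ (w - x) * deriv θ 0 / (θ w * θ x)) w₂ (s - u) *
        (fun w x => θ (w - x) * deriv θ 0 / (θ w * θ x)) w₁ (t - u) +
      (fun w x => θ (w - x) * deriv θ 0 / (θ w * θ x)) w₁ (t - s) *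
        (fun w x => θ (w - x) * deriv θ 0 / (θ w * θ x)) (w₁ + w₂) (s - u) = 0 := by
  simp only [← mem_periodLattice] at hzero hw₁ hw₂ hw₁₂ htu hst hsu
  have hθ' : IsJacobiTheta₁ τ θ := ⟨hθ, hθ1, hθ2, hodd, hzero,
    fun z hz => by obtain ⟨m, n, rfl⟩ := mem_periodLattice.1 hz; exact hsimple m n⟩
  have hne {z : ℂ} (hz : z ∉ periodLattice τ) : θ z ≠ 0 := mt (hzero z).1 hz
  have h := hθ'.thetaThreeTerm_eq_zero hτ.ne' hw₁₂ (s - t) (t - u)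
  simp only [thetaThreeTerm, thetaProd, add_zero, sub_add_sub_cancel', sub_sub, sub_add_sub_cancel,
    show t - u + -w₁ = -(w₁ - (t - u)) by ring, hodd] at h
  beta_reduce
  rw [← neg_sub s t, hodd, sub_neg_eq_add]
  field_simp [hne hw₁, hne hw₂, hne hw₁₂, hne htu, hne hst, hne hsu]
  linear_combination deriv θ 0 ^ 2 * h

/-- The three-term functional identity for the functions
`σ_w(t) = θ(w-t) θ'(0) / (θ(w) θ(t))`:
`σ_{w₁+w₂}(t-u) σ_{w₂}(s-t) - σ_{w₂}(s-u) σ_{w₁}(t-u) + σ_{w₁}(t-s) σ_{w₁+w₂}(s-u) = 0`,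
where `θ` is the first Jacobi theta function at a fixed modular parameter `τ` in the
upper half plane: it is entire, odd, satisfies the quasi-periodicities
`θ(z+1) = -θ(z)`, `θ(z+τ) = -e^{-πiτ-2πiz}θ(z)`, its zero set is exactly the lattice
`ℤ + ℤτ` and all of its zeros are simple.  The parameters `w₁, w₂, w₁+w₂` are assumed
to lie outside the lattice and the differences `t-u, s-t, t-s, s-u` as well, so that
all the factors are defined (the denominators are nonzero). -/
theorem sigma_three_term_identity (τ : ℂ) (hτ : 0 < τ.im) (θ : ℂ → ℂ)
    (hθ : Differentiable ℂ θ)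
    (hθ1 : ∀ z, θ (z + 1) = -θ z)
    (hθ2 : ∀ z, θ (z + τ) =
      -Complex.exp (-(Real.pi : ℂ) * Complex.I * τ - 2 * (Real.pi : ℂ) * Complex.I * z) * θ z)
    (hodd : ∀ z, θ (-z) = -θ z)
    (hzero : ∀ z, θ z = 0 ↔ ∃ m n : ℤ, z = (m : ℂ) + (n : ℂ) * τ)
    (hsimple : ∀ m n : ℤ, deriv θ ((m : ℂ) + (n : ℂ) * τ) ≠ 0)
    (w₁ w₂ : ℂ)
    (hw₁ : ¬∃ m n : ℤ, w₁ = (m : ℂ) + (n : ℂ) * τ)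
    (hw₂ : ¬∃ m n : ℤ, w₂ = (m : ℂ) + (n : ℂ) * τ)
    (hw₁₂ : ¬∃ m n : ℤ, w₁ + w₂ = (m : ℂ) + (n : ℂ) * τ)
    (t s u : ℂ)
    (htu : ¬∃ m n : ℤ, t - u = (m : ℂ) + (n : ℂ) * τ)
    (hst : ¬∃ m n : ℤ, s - t = (m : ℂ) + (n : ℂ) * τ)
    (hts : ¬∃ m n : ℤ, t - s = (m : ℂ) + (n : ℂ) * τ)
    (hsu : ¬∃ m n : ℤ, s - u = (m : ℂ) + (n : ℂ) * τ) :
    (fun w x => θ (w - x) * deriv θ 0 / (θ w * θ x)) (w₁ + w₂) (t - u) *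
        (fun w x => θ (w - x) * deriv θ 0 / (θ w * θ x)) w₂ (s - t) -
      (fun w x => θ (w - x) * deriv θ 0 / (θ w * θ x)) w₂ (s - u) *
        (fun w x => θ (w - x) * deriv θ 0 / (θ w * θ x)) w₁ (t - u) +
      (fun w x => θ (w - x) * deriv θ 0 / (θ w * θ x)) w₁ (t - s) *
        (fun w x => θ (w - x) * deriv θ 0 / (θ w * θ x)) (w₁ + w₂) (s - u) = 0 :=
  sigma_three_term_identity_general τ hτ θ hθ hθ1 hθ2 hodd hzero hsimple w₁ w₂ hw₁ hw₂ hw₁₂ t s u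
    htu hst hsu
end

section
/- The star-product on the direct sum over k in N^r of the spaces A(k) (skew-invariant parts of top cohomology of discriminantal arrangement complements), defined on trees by gluing at the root z, shifting indices, multiplying by sign and combinatorial factors, and antisymmetrizing, is dual under the pairing of Theorem 2.4 of Schechtman-Varchenko to the coproduct Delta of the free Hopf algebra U_r in which the generators are primitive. Concretely for r = 1: in A(n) (one-dimensional, spanned by the antisymmetrization of the path z - t_1 - t_2 - ... - t_n), the identity (z - t_1)^{*n} = n! * Asym(z - t_1 - ... - t_n) holds, matching Delta(f_1^n) = sum binomial(n,m) f_1^m tensor f_1^{n-m}. -/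
/-!  Ordered trees on `{z, t₁, …, t_n}` (case `r = 1` of the paper) are encoded as
pairs `(p, σ)`: `p : Fin n → Option (Fin n)` is the parent map towards the root `z`
(`none` = `z`) and `σ : Perm (Fin n)` numbers the edges by their heads.  With this
encoding the sign `ε(T)` of a tree is `sign σ`, and in the star product
`T₁ * T₂ = ε(T₁)ε(T₂)ε(T)/(k! l!) · Asym(T)` the sign factor `ε(T₁)ε(T₂)ε(T)` equals
`1`, so the star product of trees is `1/(k! l!) · Asym(glue T₁ T₂)`. -/

/-- Raw data of an ordered tree on `{z, t₁, …, t_n}`. -/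
abbrev OTreeData (n : ℕ) := (Fin n → Option (Fin n)) × Equiv.Perm (Fin n)

/-- The parent map `p` is acyclic (the data is a genuine tree). -/
def ParentAcyclic {n : ℕ} (p : Fin n → Option (Fin n)) : Prop :=
  ∀ v : Fin n, ∃ m : ℕ, (fun o : Option (Fin n) => o.bind p)^[m] (some v) = none

/-- Relabelling of the `t`-vertices by a permutation `π`. -/
def permAct {n : ℕ} (π : Equiv.Perm (Fin n)) (T : OTreeData n) : OTreeData n :=
  (fun v => (T.1 (π⁻¹ v)).map π, π * T.2)

/-- Antisymmetrization: `Asym(T) = ∑_π sgn(π) · π(T)`. -/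
noncomputable def asym {n : ℕ} (T : OTreeData n) : OTreeData n →₀ ℂ :=
  ∑ π : Equiv.Perm (Fin n),
    Finsupp.single (permAct π T) (((Equiv.Perm.sign π : ℤ) : ℂ))

/-- Gluing two ordered trees at the root `z`, shifting the vertex indices and the
edge labels of the second tree. -/
def glue {k l : ℕ} (T₁ : OTreeData k) (T₂ : OTreeData l) : OTreeData (k + l) :=
  (fun i => Fin.addCases (motive := fun _ => Option (Fin (k + l)))
      (fun i₁ => (T₁.1 i₁).map (Fin.castAdd l))
      (fun i₂ => (T₂.1 i₂).map (Fin.natAdd k)) i,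
    finSumFinEquiv.symm.trans ((Equiv.sumCongr T₁.2 T₂.2).trans finSumFinEquiv))

/-- Star product of two trees: `ε(T₁)ε(T₂)ε(T)/(k! l!) · Asym(glue T₁ T₂)`; the sign
factor is `1` in this encoding. -/
noncomputable def rawStar {k l : ℕ} (T₁ : OTreeData k) (T₂ : OTreeData l) :
    OTreeData (k + l) →₀ ℂ :=
  (((k.factorial * l.factorial : ℕ) : ℂ))⁻¹ • asym (glue T₁ T₂)

/-- Bilinear extension of the star product. -/
noncomputable def star {k l : ℕ} (x : OTreeData k →₀ ℂ) (y : OTreeData l →₀ ℂ) :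
    OTreeData (k + l) →₀ ℂ :=
  x.sum fun T₁ c₁ => y.sum fun T₂ c₂ => (c₁ * c₂) • rawStar T₁ T₂

/-- The single-edge tree `z — t₁`. -/
def edgeTree : OTreeData 1 := (fun _ => none, 1)

/-- The `n`-fold star power `(z — t₁)^{*n}`. -/
noncomputable def starPow : (n : ℕ) → (OTreeData n →₀ ℂ)
  | 0 => Finsupp.single ((fun _ => none, 1) : OTreeData 0) 1
  | n + 1 => star (starPow n) (Finsupp.single edgeTree 1)

/-- The path tree `z — t₁ — t₂ — ⋯ — t_n` with edges numbered along the path. -/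
def pathTree (n : ℕ) : OTreeData n :=
  (fun i => if h : 0 < i.val then some ⟨i.val - 1, by omega⟩ else none, 1)

/-- Relations R1 and R2 (among genuine trees). -/
def relSet (n : ℕ) : Set (OTreeData n →₀ ℂ) :=
  {x | (∃ T : OTreeData n, ∃ a b : Fin n, ParentAcyclic T.1 ∧ a ≠ b ∧
      x = Finsupp.single T 1 + Finsupp.single (T.1, T.2 * Equiv.swap a b) 1) ∨
    (∃ (p₀ : Fin n → Option (Fin n)) (σ₀ : Equiv.Perm (Fin n))
      (a b xv yv : Fin n) (v : Option (Fin n)),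
      a ≠ b ∧ xv ≠ yv ∧ v ≠ some xv ∧ v ≠ some yv ∧ σ₀ a = xv ∧ σ₀ b = yv ∧
      ParentAcyclic (Function.update (Function.update p₀ xv v) yv v) ∧
      ParentAcyclic (Function.update (Function.update p₀ xv v) yv (some xv)) ∧
      ParentAcyclic (Function.update (Function.update p₀ yv v) xv (some yv)) ∧
      x = Finsupp.single ((Function.update (Function.update p₀ xv v) yv v, σ₀) :
            OTreeData n) 1 +
          Finsupp.single ((Function.update (Function.update p₀ xv v) yv (some xv),
            σ₀ * Equiv.swap a b) : OTreeData n) 1 +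
          Finsupp.single ((Function.update (Function.update p₀ yv v) xv (some yv),
            σ₀ * Equiv.swap a b) : OTreeData n) 1)}

/-!
Modulo R1 an ordered tree `(p, σ)` equals `sign σ • (p, 1)`, so `Asym (p, 1) ≡ ∑_π π·p`.
The star power `(z — t₁)^{*n}` is exactly `Asym` of the corolla (every `tᵢ` attached to `z`):
each star multiplication by the edge brings a factor `1/m!`, cancelled by the `m!` signed
relabellings. Iterated, R2 rewrites a vertex with children `R` as the sum over `x ∈ R` of the
trees with the rest of `R` hung below `x`. For the broom `B_j` (a path of length `j` from `z`
with all remaining vertices attached to its end) this gives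
`∑_π π·B_j ≡ (n - j) • ∑_π π·B_{j+1}`,
hence `∑_π π·corolla ≡ n! • ∑_π π·path`.
-/

open Equiv Finset
open Function hiding swap

section ParentMaps

variable {n : ℕ} {p : Fin n → Option (Fin n)}

theorem parentAcyclic_of_rank (d : Fin n → ℕ) (hd : ∀ v w, p v = some w → d w < d v) :
    ParentAcyclic p := by
  intro v
  induction hv : d v using Nat.strong_induction_on generalizing v with
  | _ k ih =>
    cases hpv : p v with
    | none => exact ⟨1, by simpa using hpv⟩
    | some w =>
      obtain ⟨m, hm⟩ := ih (d w) (hv ▸ hd v w hpv) w rfl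
      exact ⟨m + 1, by simpa [hpv] using hm⟩

theorem ParentAcyclic.exists_depth (h : ParentAcyclic p) :
    ∃ d : Option (Fin n) → ℕ, ∀ v, d (some v) = d (p v) + 1 := by
  have hex : ∀ o : Option (Fin n), ∃ m, (fun o : Option (Fin n) => o.bind p)^[m] o = none
    | none => ⟨0, rfl⟩
    | some v => h v
  exact ⟨fun o => Nat.find (hex o), fun v =>
    Nat.find_comp_succ (hex (some v)) (hex (p v)) (by simp)⟩

theorem ParentAcyclic.apply_ne_some_self (h : ParentAcyclic p) (v : Fin n) : p v ≠ some v := by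
  obtain ⟨d, hd⟩ := h.exists_depth
  intro hv
  have := hd v
  rw [hv] at this
  omega

def reparent (p : Fin n → Option (Fin n)) (S : Finset (Fin n)) (x : Fin n) :
    Fin n → Option (Fin n) :=
  fun w => if w ∈ S then some x else p w

@[simp]
theorem reparent_empty (x : Fin n) : reparent p ∅ x = p := by
  funext w
  simp [reparent]

theorem update_eq_reparent (y x : Fin n) : update p y (some x) = reparent p {y} x := by
  funext w
  by_cases hw : w = y <;> simp [reparent, hw]

-- Hanging siblings below a sibling only raises them one level: rank by twice the depth, plus one.
theorem ParentAcyclic.reparent (h : ParentAcyclic p) {S : Finset (Fin n)} {x : Fin n}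
    (hS : ∀ s ∈ S, p s = p x) (hx : x ∉ S) : ParentAcyclic (reparent p S x) := by
  obtain ⟨d, hd⟩ := h.exists_depth
  refine parentAcyclic_of_rank (fun v => 2 * d (some v) + if v ∈ S then 1 else 0)
    fun v w hvw => ?_
  by_cases hv : v ∈ S
  · simp only [_root_.reparent, if_pos hv, Option.some.injEq] at hvw
    subst hvw
    simp only [hx, hv, if_false, if_true, hd v, hd x, hS v hv]
    omega
  · simp only [_root_.reparent, if_neg hv] at hvw
    have := hd v
    rw [hvw] at this
    simp only [hv, if_false]
    split_ifs <;> omega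

def relabel (π : Perm (Fin n)) (p : Fin n → Option (Fin n)) : Fin n → Option (Fin n) :=
  fun v => (p (π⁻¹ v)).map π

theorem permAct_eq_relabel (π : Perm (Fin n)) (T : OTreeData n) :
    permAct π T = (relabel π T.1, π * T.2) := rfl

theorem relabel_mul (π σ : Perm (Fin n)) : relabel (π * σ) p = relabel π (relabel σ p) := by
  funext v
  simp [relabel, Option.map_map, mul_inv_rev]

theorem relabel_reparent (π : Perm (Fin n)) (S : Finset (Fin n)) (x : Fin n) :
    relabel π (reparent p S x) = reparent (relabel π p) (S.map π.toEmbedding) (π x) := by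
  funext v
  simp [relabel, _root_.reparent, mem_map_equiv, Perm.inv_def, apply_ite (Option.map π)]

theorem relabel_eq_some_iff {π : Perm (Fin n)} {v w : Fin n} :
    relabel π p v = some w ↔ p (π⁻¹ v) = some (π⁻¹ w) := by
  simp only [relabel, Option.map_eq_some_iff]
  constructor
  · rintro ⟨a, ha, rfl⟩
    simpa using ha
  · exact fun h => ⟨_, h, π.apply_symm_apply w⟩

theorem ParentAcyclic.relabel (h : ParentAcyclic p) (π : Perm (Fin n)) :
    ParentAcyclic (relabel π p) := by
  obtain ⟨d, hd⟩ := h.exists_depth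
  refine parentAcyclic_of_rank (fun v => d (some (π⁻¹ v))) fun v w hvw => ?_
  rw [relabel_eq_some_iff] at hvw
  have := hd (π⁻¹ v)
  rw [hvw] at this
  omega

end ParentMaps

theorem intCast_units_mul_self {R : Type*} [Ring R] (u : ℤˣ) :
    ((u : ℤ) : R) * ((u : ℤ) : R) = 1 := by
  rw [← Int.cast_mul, ← Units.val_mul, Int.units_mul_self, Units.val_one, Int.cast_one]

section StarPower

variable {n : ℕ}

def corolla (n : ℕ) : OTreeData n := (fun _ => none, 1)

@[simp]
theorem relabel_const_none (π : Perm (Fin n)) :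
    relabel π (fun _ => none) = (fun _ => none : Fin n → Option (Fin n)) := rfl

theorem asym_const_none (σ : Perm (Fin n)) :
    asym ((fun _ => none, σ) : OTreeData n) =
      ((Perm.sign σ : ℤ) : ℂ) • asym (corolla n) := by
  simp only [asym, corolla, permAct_eq_relabel, relabel_const_none, mul_one, smul_sum,
    Finsupp.smul_single]
  refine Fintype.sum_equiv (Equiv.mulRight σ) _ _ fun π => ?_
  rw [coe_mulRight, Perm.sign_mul, Units.val_mul, Int.cast_mul, smul_eq_mul]
  congr 1
  linear_combination
    -((Perm.sign π : ℤ) : ℂ) * intCast_units_mul_self (R := ℂ) (Perm.sign σ)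

theorem glue_const_none_edgeTree (π : Perm (Fin n)) :
    glue ((fun _ => none, π) : OTreeData n) edgeTree =
      (fun _ => none, finSumFinEquiv.symm.trans ((sumCongr π 1).trans finSumFinEquiv)) := by
  refine Prod.ext (funext fun i => ?_) rfl
  refine Fin.addCases (fun i => ?_) (fun i => ?_) i <;> simp [glue, edgeTree]

theorem rawStar_corolla_edgeTree (π : Perm (Fin n)) :
    rawStar (permAct π (corolla n)) edgeTree =
      ((n.factorial : ℂ)⁻¹ * ((Perm.sign π : ℤ) : ℂ)) • asym (corolla (n + 1)) := by
  have hsign : Perm.sign (finSumFinEquiv.symm.trans ((sumCongr π (1 : Perm (Fin 1))).trans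
      finSumFinEquiv)) = Perm.sign π := by
    rw [← trans_assoc, Perm.sign_symm_trans_trans, Perm.sign_sumCongr, Perm.sign_one, mul_one]
  rw [corolla, permAct_eq_relabel, relabel_const_none, mul_one, rawStar, glue_const_none_edgeTree,
    asym_const_none, hsign, smul_smul, Nat.factorial_one, mul_one]

theorem star_single_one_right {k l : ℕ} (x : OTreeData k →₀ ℂ) (T₂ : OTreeData l) :
    star x (Finsupp.single T₂ 1) =
      Finsupp.linearCombination ℂ (fun T₁ => rawStar T₁ T₂) x := by
  simp [_root_.star, Finsupp.linearCombination_apply]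

theorem starPow_eq_asym_corolla (n : ℕ) : starPow n = asym (corolla n) := by
  induction n with
  | zero => simp [starPow, asym, corolla, permAct_eq_relabel]
  | succ n ih =>
    rw [starPow, ih, star_single_one_right, asym, map_sum]
    have hcoef (π : Perm (Fin n)) : ((Perm.sign π : ℤ) : ℂ) *
        ((n.factorial : ℂ)⁻¹ * ((Perm.sign π : ℤ) : ℂ)) = (n.factorial : ℂ)⁻¹ := by
      linear_combination (n.factorial : ℂ)⁻¹ * intCast_units_mul_self (R := ℂ) (Perm.sign π)
    simp only [Finsupp.linearCombination_single, rawStar_corolla_edgeTree, smul_smul, hcoef,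
      sum_const, card_univ, Fintype.card_perm, Fintype.card_fin, ← Nat.cast_smul_eq_nsmul ℂ]
    rw [mul_inv_cancel₀ (Nat.cast_ne_zero.mpr n.factorial_ne_zero), one_smul]

end StarPower

section Relations

variable {n : ℕ} {p : Fin n → Option (Fin n)}

noncomputable def cls (T : OTreeData n) :
    (OTreeData n →₀ ℂ) ⧸ Submodule.span ℂ (relSet n) :=
  Submodule.Quotient.mk (Finsupp.single T 1)

theorem mk_single (T : OTreeData n) (c : ℂ) :
    Submodule.Quotient.mk (p := Submodule.span ℂ (relSet n)) (Finsupp.single T c) =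
      c • cls T := by
  rw [cls, ← Submodule.Quotient.mk_smul, Finsupp.smul_single_one]

theorem cls_mul_swap (hp : ParentAcyclic p) (σ : Perm (Fin n)) {a b : Fin n} (hab : a ≠ b) :
    cls (p, σ * swap a b) = -cls (p, σ) := by
  have hrel : Finsupp.single (p, σ) 1 + Finsupp.single (p, σ * swap a b) 1 ∈
      Submodule.span ℂ (relSet n) :=
    Submodule.subset_span (Or.inl ⟨(p, σ), a, b, hp, hab, rfl⟩)
  rw [← Submodule.Quotient.mk_eq_zero, Submodule.Quotient.mk_add] at hrel
  exact eq_neg_of_add_eq_zero_right hrel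

theorem cls_eq_sign_smul (hp : ParentAcyclic p) (σ : Perm (Fin n)) :
    cls (p, σ) = ((Perm.sign σ : ℤ) : ℂ) • cls (p, 1) := by
  induction σ using Perm.swap_induction_on' with
  | one => simp
  | mul_swap f x y hxy ih => simp [cls_mul_swap hp f hxy, ih, Perm.sign_swap hxy]

theorem cls_eq_add_of_siblings (hp : ParentAcyclic p) {x y : Fin n} (hxy : x ≠ y)
    (hsib : p x = p y) :
    cls (p, 1) = cls (update p y (some x), 1) + cls (update p x (some y), 1) := by
  have hpx : update (update p x (p x)) y (p x) = p := by
    rw [update_eq_self, hsib, update_eq_self]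
  have hpy : update (update p x (p x)) y (some x) = update p y (some x) := by
    rw [update_eq_self]
  have hpz : update (update p y (p x)) x (some y) = update p x (some y) := by
    rw [hsib, update_eq_self]
  have hx : ParentAcyclic (update p y (some x)) := by
    rw [update_eq_reparent]
    exact hp.reparent (by simpa using hsib.symm) (by simpa using hxy)
  have hy : ParentAcyclic (update p x (some y)) := by
    rw [update_eq_reparent]
    exact hp.reparent (by simpa using hsib) (by simpa using hxy.symm)
  have hrel : Finsupp.single (p, 1) 1 + Finsupp.single (update p y (some x), 1 * swap x y) 1
      + Finsupp.single (update p x (some y), 1 * swap x y) 1 ∈ Submodule.span ℂ (relSet n) := by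
    refine Submodule.subset_span (Or.inr ⟨p, 1, x, y, x, y, p x, hxy, hxy,
      hp.apply_ne_some_self x, hsib ▸ hp.apply_ne_some_self y, rfl, rfl,
      by rwa [hpx], by rwa [hpy], by rwa [hpz], ?_⟩)
    rw [hpx, hpy, hpz]
  rw [← Submodule.Quotient.mk_eq_zero, Submodule.Quotient.mk_add,
    Submodule.Quotient.mk_add] at hrel
  change cls _ + cls _ + cls _ = 0 at hrel
  rw [cls_mul_swap hx 1 hxy, cls_mul_swap hy 1 hxy] at hrel
  linear_combination (norm := module) hrel

theorem mk_asym (hp : ParentAcyclic p) :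
    Submodule.Quotient.mk (p := Submodule.span ℂ (relSet n)) (asym (p, 1)) =
      ∑ π : Perm (Fin n), cls (relabel π p, 1) := by
  rw [← Submodule.mkQ_apply, asym, map_sum]
  refine sum_congr rfl fun π _ => ?_
  rw [Submodule.mkQ_apply, mk_single, permAct_eq_relabel, mul_one,
    cls_eq_sign_smul (hp.relabel π), smul_smul, intCast_units_mul_self, one_smul]
theorem cls_eq_sum_reparent {R : Finset (Fin n)} {u : Option (Fin n)} (hp : ParentAcyclic p)
    (hR : R.Nonempty) (hsib : ∀ s ∈ R, p s = u) :
    cls (p, 1) = ∑ x ∈ R, cls (reparent p (R.erase x) x, 1) := by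
  induction hR using Finset.Nonempty.cons_induction generalizing p u with
  | singleton a => simp
  | cons a s has hs ih =>
    have hpa : p a = u := hsib a (mem_cons_self a s)
    have hps : ∀ x ∈ s, p x = u := fun x hx => hsib x (mem_cons_of_mem hx)
    have hq : ParentAcyclic (reparent p s a) :=
      hp.reparent (fun x hx => by rw [hps x hx, hpa]) has
    have hqs : ∀ x ∈ s, reparent p s a x = some a := fun x hx => if_pos hx
    rw [ih hp hps, sum_cons, erase_cons, ih hq hqs, ← sum_add_distrib]
    refine sum_congr rfl fun x hx => ?_
    have hax : a ≠ x := fun h => has (h ▸ hx)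
    have hpx : ParentAcyclic (reparent p (s.erase x) x) :=
      hp.reparent (fun y hy => by rw [hps y (mem_of_mem_erase hy), hps x hx]) (notMem_erase x s)
    rw [cls_eq_add_of_siblings hpx hax.symm (by simp [reparent, hax, has, hpa, hps x hx]), add_comm]
    congr 3 <;> funext w <;> simp only [reparent, update_apply, mem_erase, mem_cons] <;>
      split_ifs <;> simp_all

end Relations

section Broom

variable {n : ℕ}

/-- The path `z — 0 — 1 — ⋯ — (j-1)` with every other vertex attached to its end
(to `z` when `j = 0`). -/
def broom (j : ℕ) : Fin n → Option (Fin n) :=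
  fun i => if h : 0 < min i.val j then some ⟨min i.val j - 1, by omega⟩ else none

theorem parentAcyclic_broom (j : ℕ) : ParentAcyclic (broom (n := n) j) :=
  parentAcyclic_of_rank Fin.val fun v w h => by
    simp only [broom, Option.dite_none_right_eq_some, Option.some.injEq] at h
    obtain ⟨h0, rfl⟩ := h
    exact Nat.lt_of_lt_of_le (Nat.sub_lt h0 one_pos) (min_le_left _ _)

theorem broom_zero : broom (n := n) 0 = fun _ => none := by
  funext i
  simp [broom]

theorem corolla_eq_broom (n : ℕ) : corolla n = (broom 0, 1) := by
  rw [corolla, broom_zero]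

theorem pathTree_eq_broom (n : ℕ) : pathTree n = (broom n, 1) := by
  refine Prod.ext (funext fun i => ?_) rfl
  simp [pathTree, broom]

theorem broom_of_le {j : ℕ} {i J : Fin n} (hJ : J.val = j) (hi : J ≤ i) :
    broom j i = broom j J := by
  simp only [broom, hJ, min_self, min_eq_right (show j ≤ i.val by omega)]

theorem broom_eq_some_iff {j : ℕ} {i w : Fin n} :
    broom j i = some w ↔ 0 < min i.val j ∧ w.val = min i.val j - 1 := by
  simp only [broom, Option.dite_none_right_eq_some, Option.some.injEq, Fin.ext_iff, exists_prop]
  exact and_congr_right fun _ => eq_comm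

-- Hanging the other leaves below the leaf `i` extends the handle by `i`; the swap `J ↔ i`
-- moves it to position `j`.
theorem reparent_broom {j : ℕ} {J i : Fin n} (hJ : J.val = j) (hi : J ≤ i) :
    reparent (broom j) ((Ici J).erase i) i = relabel (swap J i) (broom (j + 1)) := by
  funext v
  refine Option.ext fun w => ?_
  subst hJ
  rw [Fin.le_iff_val_le_val] at hi
  rw [relabel_eq_some_iff]
  simp only [reparent, swap_inv, broom_eq_some_iff, mem_erase, mem_Ici, Fin.le_iff_val_le_val,
    apply_ite (· = some w), Option.some.injEq, swap_apply_def, apply_ite Fin.val, Fin.ext_iff]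
  split_ifs <;> omega

end Broom

section Symmetrization

variable {n : ℕ}

theorem cls_relabel_broom {j : ℕ} (hj : j < n) (π : Perm (Fin n)) :
    cls (relabel π (broom j), 1) =
      ∑ i ∈ Ici (⟨j, hj⟩ : Fin n),
        cls (relabel (π * swap ⟨j, hj⟩ i) (broom (j + 1)), 1) := by
  set J : Fin n := ⟨j, hj⟩
  have hsib : ∀ s ∈ (Ici J).map π.toEmbedding,
      relabel π (broom j) s = relabel π (broom j) (π J) := by
    intro s hs
    rw [mem_map_equiv, mem_Ici] at hs
    simp only [relabel, Perm.inv_def, symm_apply_apply]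
    rw [broom_of_le rfl hs]
  rw [cls_eq_sum_reparent ((parentAcyclic_broom j).relabel π)
    ⟨π J, mem_map_of_mem _ (mem_Ici.mpr le_rfl)⟩ hsib, sum_map]
  refine sum_congr rfl fun i hi => ?_
  rw [← map_erase, coe_toEmbedding, ← relabel_reparent, reparent_broom rfl (mem_Ici.mp hi),
    relabel_mul]

theorem sum_cls_relabel_broom_succ {j : ℕ} (hj : j < n) :
    ∑ π : Perm (Fin n), cls (relabel π (broom j), 1) =
      (n - j) • ∑ π : Perm (Fin n), cls (relabel π (broom (j + 1)), 1) := by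
  simp_rw [cls_relabel_broom hj]
  have hshift (σ : Perm (Fin n)) :
      ∑ π : Perm (Fin n), cls (relabel (π * σ) (broom (j + 1)), 1) =
        ∑ π : Perm (Fin n), cls (relabel π (broom (j + 1)), 1) :=
    Equiv.sum_comp (Equiv.mulRight σ) fun π => cls (relabel π (broom (j + 1)), 1)
  rw [sum_comm, sum_congr rfl fun i _ => hshift _, sum_const, Fin.card_Ici]

theorem sum_cls_relabel_broom_zero :
    ∑ π : Perm (Fin n), cls (relabel π (broom 0), 1) =
      n.factorial • ∑ π : Perm (Fin n), cls (relabel π (broom n), 1) := by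
  suffices h : ∀ k j, j + k = n → ∑ π : Perm (Fin n), cls (relabel π (broom j), 1) =
      k.factorial • ∑ π : Perm (Fin n), cls (relabel π (broom n), 1) from h n 0 (zero_add n)
  intro k
  induction k with
  | zero => intro j hj; simp [← hj]
  | succ k ih =>
    intro j hj
    rw [sum_cls_relabel_broom_succ (by omega), ih (j + 1) (by omega), smul_smul,
      Nat.factorial_succ, show n - j = k + 1 by omega]

end Symmetrization

/-- In `A(n)` (the span of ordered trees modulo R1 and R2, for `r = 1`), the `n`-fold
star power of the single-edge tree `z — t₁` equals `n!` times the antisymmetrization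
of the path tree `z — t₁ — ⋯ — t_n`:  `(z — t₁)^{*n} = n! · Asym(z—t₁—⋯—t_n)`.  This
is the concrete `r = 1` instance of the duality between the star product and the
shuffle coproduct `Δ(f₁ⁿ) = ∑ binom(n,m) f₁^m ⊗ f₁^{n-m}` of the free Hopf algebra. -/
theorem starPow_eq_factorial_asym_path (n : ℕ) :
    Submodule.Quotient.mk (p := Submodule.span ℂ (relSet n)) (starPow n) =
      Submodule.Quotient.mk (p := Submodule.span ℂ (relSet n))
        ((n.factorial : ℂ) • asym (pathTree n)) := by
  rw [starPow_eq_asym_corolla, corolla_eq_broom, Submodule.Quotient.mk_smul, pathTree_eq_broom,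
    mk_asym (parentAcyclic_broom 0), mk_asym (parentAcyclic_broom n), sum_cls_relabel_broom_zero,
    Nat.cast_smul_eq_nsmul]
end
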